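/- Let Θ be a parameter space with δ-covering set {θ₁,…,θ_m} under TV distance on the induced distributions {P_θ}. Given i.i.d. X₁,…,Xₙ ∼ (1−ε)P_θ + εQ with θ ∈ Θ and arbitrary Q, define pairwise Scheffé tests ϕ_{jk} and the tournament winner θ̂ = θ_ĵ where ĵ minimizes ∑_{k≠j} ϕ_{jk}. If η > 8(ε+δ), then sup over θ∈Θ and Q of the probability that TV(P_{θ̂}, P_θ) > η + δ is at most 4·M(δ)²·exp(−(n/2)·(η/4 − 2(ε+δ))²), where M(δ) is the δ-covering number of Θ under TV. -/

import Mathlib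

open MeasureTheory

noncomputable def tvDist {Ω : Type*} [MeasurableSpace Ω] (P Q : Measure Ω) : ℝ :=
  ⨆ B : {B : Set Ω // MeasurableSet B}, |(P B.1).toReal - (Q B.1).toReal|

noncomputable def mix {Ω : Type*} [MeasurableSpace Ω] (ε : ℝ) (P Q : Measure Ω) : Measure Ω :=
  (ENNReal.ofReal (1 - ε)) • P + (ENNReal.ofReal ε) • Q

/-!
For the Scheffé set `A = {p > q}` of two laws `P, Q` one has `TV(P, Q) = P(A) - Q(A)`, so whichever
of the two loses the test on `A` predicts `Pₙ(A)` with error at least `TV(P, Q) / 2`. If every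
empirical frequency `Pₙ(A_{jk})` is within `t` of its value under the sampling law
`μ = (1-ε)P_θ + εQ`, a match between `θ_j` and `θ_k` can therefore only be lost by a candidate `ℓ`
when `TV(P_{θ_j}, P_{θ_k}) < 2(t + TV(μ, P_{θ_ℓ}))`. Let `θ_{i₀}` be a cover point within `δ` of
`θ`, so that `TV(μ, P_{θ_{i₀}}) ≤ ε + δ =: r`. Then `i₀` loses only to candidates within `2(t+r)`
of it, whereas a candidate at distance at least `8(t+r)` from `i₀` loses to all of these and to `i₀`
itself, hence loses strictly more matches than `i₀` and is not the winner. With `t = η/8 - r`, the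
winner is within `η + δ` of `θ` unless one of the `m²` frequencies deviates by `t`, which by
Hoeffding's inequality has probability at most `2 exp(-2nt²)` for each pair.
-/

section TotalVariation

variable {Ω : Type*} [MeasurableSpace Ω] {P Q R : Measure Ω}

lemma abs_toReal_sub_toReal_le_one [IsProbabilityMeasure P] [IsProbabilityMeasure Q]
    (B : Set Ω) : |(P B).toReal - (Q B).toReal| ≤ 1 := by
  have hP : (P B).toReal ≤ 1 := measureReal_le_one
  have hQ : (Q B).toReal ≤ 1 := measureReal_le_one
  rw [abs_sub_le_iff]
  constructor <;> linarith [ENNReal.toReal_nonneg (a := P B), ENNReal.toReal_nonneg (a := Q B)]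

lemma abs_toReal_sub_toReal_le_tvDist [IsProbabilityMeasure P] [IsProbabilityMeasure Q]
    {B : Set Ω} (hB : MeasurableSet B) : |(P B).toReal - (Q B).toReal| ≤ tvDist P Q :=
  le_ciSup (f := fun B : {B : Set Ω // MeasurableSet B} => |(P B.1).toReal - (Q B.1).toReal|)
    ⟨1, by rintro _ ⟨B, rfl⟩; exact abs_toReal_sub_toReal_le_one B.1⟩ ⟨B, hB⟩

lemma tvDist_le_of_forall {c : ℝ}
    (h : ∀ B : Set Ω, MeasurableSet B → |(P B).toReal - (Q B).toReal| ≤ c) :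
    tvDist P Q ≤ c :=
  ciSup_le fun B => h B.1 B.2

lemma tvDist_comm (P Q : Measure Ω) : tvDist P Q = tvDist Q P := by
  simp only [tvDist, abs_sub_comm]

lemma tvDist_triangle [IsProbabilityMeasure P] [IsProbabilityMeasure Q] [IsProbabilityMeasure R] :
    tvDist P R ≤ tvDist P Q + tvDist Q R :=
  tvDist_le_of_forall fun _ hB =>
    (abs_sub_le _ _ _).trans (add_le_add (abs_toReal_sub_toReal_le_tvDist hB)
      (abs_toReal_sub_toReal_le_tvDist hB))

lemma mix_apply_toReal {ε : ℝ} (hε0 : 0 ≤ ε) (hε1 : ε ≤ 1) [IsFiniteMeasure P]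
    [IsFiniteMeasure Q] (s : Set Ω) :
    (mix ε P Q s).toReal = (1 - ε) * (P s).toReal + ε * (Q s).toReal := by
  rw [mix, Measure.add_apply, Measure.smul_apply, Measure.smul_apply, smul_eq_mul, smul_eq_mul,
    ENNReal.toReal_add (by finiteness) (by finiteness), ENNReal.toReal_mul, ENNReal.toReal_mul,
    ENNReal.toReal_ofReal (by linarith), ENNReal.toReal_ofReal hε0]

lemma isProbabilityMeasure_mix {ε : ℝ} (hε0 : 0 ≤ ε) (hε1 : ε ≤ 1) [IsProbabilityMeasure P]
    [IsProbabilityMeasure Q] : IsProbabilityMeasure (mix ε P Q) := by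
  constructor
  rw [mix, Measure.add_apply, Measure.smul_apply, Measure.smul_apply, measure_univ, measure_univ,
    smul_eq_mul, smul_eq_mul, mul_one, mul_one, ← ENNReal.ofReal_add (by linarith) hε0]
  norm_num

lemma tvDist_mix_le {ε : ℝ} (hε0 : 0 ≤ ε) (hε1 : ε ≤ 1) [IsProbabilityMeasure P]
    [IsProbabilityMeasure Q] : tvDist (mix ε P Q) P ≤ ε :=
  tvDist_le_of_forall fun B _ => by
    rw [mix_apply_toReal hε0 hε1, show (1 - ε) * (P B).toReal + ε * (Q B).toReal - (P B).toReal
      = ε * ((Q B).toReal - (P B).toReal) by ring, abs_mul, abs_of_nonneg hε0]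
    exact mul_le_of_le_one_right hε0 (abs_toReal_sub_toReal_le_one B)

end TotalVariation

section Scheffe

variable {Ω : Type*} [MeasurableSpace Ω] {P Q : Measure Ω}

def scheffeSet (P Q : Measure Ω) : Set Ω := {x | Q.rnDeriv (P + Q) x < P.rnDeriv (P + Q) x}

lemma measurableSet_scheffeSet : MeasurableSet (scheffeSet P Q) :=
  measurableSet_lt (Measure.measurable_rnDeriv _ _) (Measure.measurable_rnDeriv _ _)

lemma setLIntegral_rnDeriv_add_left [IsFiniteMeasure P] [IsFiniteMeasure Q] (S : Set Ω) :
    ∫⁻ x in S, P.rnDeriv (P + Q) x ∂(P + Q) = P S :=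
  Measure.setLIntegral_rnDeriv (Measure.absolutelyContinuous_of_le (Measure.le_add_right le_rfl)) S

lemma setLIntegral_rnDeriv_add_right [IsFiniteMeasure P] [IsFiniteMeasure Q] (S : Set Ω) :
    ∫⁻ x in S, Q.rnDeriv (P + Q) x ∂(P + Q) = Q S :=
  Measure.setLIntegral_rnDeriv (Measure.absolutelyContinuous_of_le (Measure.le_add_left le_rfl)) S

lemma measure_le_of_subset_scheffeSet [IsFiniteMeasure P] [IsFiniteMeasure Q] {S : Set Ω}
    (hS : S ⊆ scheffeSet P Q) : Q S ≤ P S := by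
  rw [← setLIntegral_rnDeriv_add_left (P := P) (Q := Q),
    ← setLIntegral_rnDeriv_add_right (P := P) (Q := Q)]
  exact setLIntegral_mono (Measure.measurable_rnDeriv _ _) fun x hx => (hS hx).le

lemma measure_le_of_subset_compl_scheffeSet [IsFiniteMeasure P] [IsFiniteMeasure Q] {S : Set Ω}
    (hS : S ⊆ (scheffeSet P Q)ᶜ) : P S ≤ Q S := by
  rw [← setLIntegral_rnDeriv_add_left (P := P) (Q := Q),
    ← setLIntegral_rnDeriv_add_right (P := P) (Q := Q)]
  exact setLIntegral_mono (Measure.measurable_rnDeriv _ _) fun x hx => not_lt.mp (hS hx)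

lemma toReal_sub_toReal_le_scheffeSet [IsFiniteMeasure P] [IsFiniteMeasure Q] {B : Set Ω}
    (hB : MeasurableSet B) :
    (P B).toReal - (Q B).toReal ≤ (P (scheffeSet P Q)).toReal - (Q (scheffeSet P Q)).toReal := by
  set A := scheffeSet P Q
  have hA : MeasurableSet A := measurableSet_scheffeSet
  have hBA : P.real (B \ A) ≤ Q.real (B \ A) := ENNReal.toReal_mono (by finiteness)
    (measure_le_of_subset_compl_scheffeSet fun _ hx => hx.2)
  have hAB : Q.real (A \ B) ≤ P.real (A \ B) := ENNReal.toReal_mono (by finiteness)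
    (measure_le_of_subset_scheffeSet fun _ hx => hx.1)
  have := measureReal_inter_add_sdiff (μ := P) (s := B) hA
  have := measureReal_inter_add_sdiff (μ := Q) (s := B) hA
  have := measureReal_inter_add_sdiff (μ := P) (s := A) hB
  have := measureReal_inter_add_sdiff (μ := Q) (s := A) hB
  simp only [Set.inter_comm A B, measureReal_def] at *
  linarith

lemma tvDist_eq_scheffeSet [IsProbabilityMeasure P] [IsProbabilityMeasure Q] :
    tvDist P Q = (P (scheffeSet P Q)).toReal - (Q (scheffeSet P Q)).toReal := by
  refine le_antisymm (tvDist_le_of_forall fun B hB => abs_sub_le_iff.mpr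
    ⟨toReal_sub_toReal_le_scheffeSet hB, ?_⟩)
    ((le_abs_self _).trans (abs_toReal_sub_toReal_le_tvDist measurableSet_scheffeSet))
  have := toReal_sub_toReal_le_scheffeSet (P := P) (Q := Q) hB.compl
  rw [← measureReal_def, ← measureReal_def, probReal_compl_eq_one_sub hB,
    probReal_compl_eq_one_sub hB, measureReal_def, measureReal_def] at this
  linarith

end Scheffe

section Hoeffding

open ProbabilityTheory Real
open scoped NNReal

variable {Ω : Type*} [MeasurableSpace Ω] {μ : Measure Ω} [IsProbabilityMeasure μ]

noncomputable def empiricalFreq {n : ℕ} (x : Fin n → Ω) (E : Set Ω) : ℝ :=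
  (∑ i, E.indicator (fun _ => (1 : ℝ)) (x i)) / n

lemma ProbabilityTheory.HasSubgaussianMGF.measureReal_pi_sum_ge_le {ι : Type*} [Fintype ι]
    {f : Ω → ℝ} {c : ℝ≥0} (hf : HasSubgaussianMGF f c μ) {ε : ℝ} (hε : 0 ≤ ε) :
    (Measure.pi fun _ : ι => μ).real {x | ε ≤ ∑ i, f (x i)}
      ≤ exp (-ε ^ 2 / (2 * (Fintype.card ι * c))) := by
  have hindep : iIndepFun (fun i (x : ι → Ω) => f (x i)) (Measure.pi fun _ => μ) :=
    iIndepFun_pi fun _ => hf.aemeasurable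
  have hsubG : ∀ i ∈ Finset.univ, HasSubgaussianMGF (fun x : ι → Ω => f (x i)) c
      (Measure.pi fun _ => μ) := fun i _ =>
    HasSubgaussianMGF.of_map (measurable_pi_apply i).aemeasurable
      (by rwa [(measurePreserving_eval (fun _ => μ) i).map_eq])
  simpa using HasSubgaussianMGF.measure_sum_ge_le_of_iIndepFun hindep hsubG hε

lemma hasSubgaussianMGF_indicator_sub {E : Set Ω} (hE : MeasurableSet E) :
    HasSubgaussianMGF (fun ω => E.indicator (fun _ => (1 : ℝ)) ω - (μ E).toReal) (1 / 4) μ := by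
  have h := hasSubgaussianMGF_of_mem_Icc (μ := μ) (X := E.indicator fun _ => (1 : ℝ))
    (a := 0) (b := 1) (measurable_const.indicator hE).aemeasurable
    (ae_of_all _ fun ω => by by_cases hω : ω ∈ E <;> simp [hω])
  convert h using 2
  · simp [integral_indicator hE, measureReal_def]
  · norm_num

lemma measureReal_abs_empiricalFreq_sub_ge_le {E : Set Ω} (hE : MeasurableSet E) {n : ℕ}
    (hn : 0 < n) {t : ℝ} (ht : 0 ≤ t) :
    (Measure.pi fun _ : Fin n => μ).real {x | t ≤ |empiricalFreq x E - (μ E).toReal|}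
      ≤ 2 * exp (-2 * n * t ^ 2) := by
  set f : Ω → ℝ := fun ω => E.indicator (fun _ => (1 : ℝ)) ω - (μ E).toReal
  have hf : HasSubgaussianMGF f (1 / 4) μ := hasSubgaussianMGF_indicator_sub hE
  have hsum : ∀ x : Fin n → Ω, ∑ i, f (x i) = n * (empiricalFreq x E - (μ E).toReal) := by
    intro x
    have : (n : ℝ) ≠ 0 := by positivity
    simp only [f, empiricalFreq, Finset.sum_sub_distrib, Finset.sum_const, Finset.card_univ,
      Fintype.card_fin, nsmul_eq_mul]
    field_simp
  have htail : ∀ {g : Ω → ℝ}, HasSubgaussianMGF g (1 / 4) μ →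
      (Measure.pi fun _ : Fin n => μ).real {x | n * t ≤ ∑ i, g (x i)}
        ≤ exp (-2 * n * t ^ 2) := by
    intro g hg
    refine (hg.measureReal_pi_sum_ge_le (by positivity)).trans_eq ?_
    congr 1
    simp only [Fintype.card_fin, NNReal.coe_div, NNReal.coe_one, NNReal.coe_ofNat]
    field_simp
    ring
  calc _ ≤ (Measure.pi fun _ : Fin n => μ).real
          ({x | n * t ≤ ∑ i, f (x i)} ∪ {x | n * t ≤ ∑ i, (-f) (x i)}) := by
        refine measureReal_mono fun x hx => ?_
        simp only [Set.mem_ofPred_eq, Set.mem_union, Pi.neg_apply, Finset.sum_neg_distrib,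
          hsum] at hx ⊢
        rcases le_abs'.mp hx with h | h
        · right; nlinarith
        · left; nlinarith
    _ ≤ exp (-2 * n * t ^ 2) + exp (-2 * n * t ^ 2) :=
        (measureReal_union_le _ _).trans (add_le_add (htail hf) (htail hf.neg))
    _ = 2 * exp (-2 * n * t ^ 2) := by ring

lemma measureReal_exists_abs_empiricalFreq_sub_ge_le {κ : Type*} [Fintype κ] {E : κ → Set Ω}
    (hE : ∀ a, MeasurableSet (E a)) {n : ℕ} (hn : 0 < n) {t : ℝ} (ht : 0 ≤ t) :
    (Measure.pi fun _ : Fin n => μ).real {x | ∃ a, t ≤ |empiricalFreq x (E a) - (μ (E a)).toReal|}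
      ≤ Fintype.card κ * (2 * exp (-2 * n * t ^ 2)) := by
  rw [Set.ofPred_exists]
  refine (measureReal_iUnion_fintype_le _).trans ?_
  simpa using Finset.sum_le_sum fun a (_ : a ∈ Finset.univ) =>
    measureReal_abs_empiricalFreq_sub_ge_le (μ := μ) (hE a) hn ht

end Hoeffding

section ScheffeTournament

variable {Ω : Type*} [MeasurableSpace Ω]

lemma tvDist_lt_of_scheffe_loser {P Q μ R : Measure Ω} [IsProbabilityMeasure P]
    [IsProbabilityMeasure Q] [IsProbabilityMeasure μ] [IsProbabilityMeasure R] {s t : ℝ}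
    (hs : |s - (μ (scheffeSet P Q)).toReal| < t)
    (hR : |s - (P (scheffeSet P Q)).toReal| + |s - (Q (scheffeSet P Q)).toReal|
      ≤ 2 * |s - (R (scheffeSet P Q)).toReal|) :
    tvDist P Q < 2 * (t + tvDist μ R) := by
  set A := scheffeSet P Q
  have hμR : |(μ A).toReal - (R A).toReal| ≤ tvDist μ R :=
    abs_toReal_sub_toReal_le_tvDist measurableSet_scheffeSet
  calc tvDist P Q = ((P A).toReal - s) + (s - (Q A).toReal) := by
        rw [tvDist_eq_scheffeSet]; ring
    _ ≤ |s - (P A).toReal| + |s - (Q A).toReal| :=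
        add_le_add (neg_le_abs (s - (P A).toReal) |>.trans_eq' (by ring)) (le_abs_self _)
    _ ≤ 2 * (|s - (μ A).toReal| + |(μ A).toReal - (R A).toReal|) := by
        linarith [abs_sub_le s (μ A).toReal (R A).toReal]
    _ < 2 * (t + tvDist μ R) := by linarith

lemma tournament_winner_dist_lt {ι : Type*} [Fintype ι] [DecidableEq ι] (d : ι → ι → ℝ)
    (hd_comm : ∀ j k, d j k = d k j) (hd_triangle : ∀ i j k, d i k ≤ d i j + d j k)
    (loses : ι → ι → Bool) (g : ι → ℝ) {c : ℝ} {i₀ : ι} (hg₀ : g i₀ ≤ c)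
    (hg : ∀ k, g k ≤ c + d i₀ k)
    (hd_loses : ∀ j k, loses j k = true → d j k < 2 * g j)
    (hd_wins : ∀ j k, loses j k = false → d j k < 2 * g k)
    {w : ι} (hw : ∀ j, (Finset.univ.filter fun k => k ≠ w ∧ loses w k = true).card
      ≤ (Finset.univ.filter fun k => k ≠ j ∧ loses j k = true).card) :
    d w i₀ < 8 * c := by
  by_contra! hfar
  set near := Finset.univ.filter fun k => d i₀ k < 2 * c
  have hd_loser_i₀ : ∀ k, loses i₀ k = true → k ∈ near := fun k hk => by
    simpa [near] using (hd_loses i₀ k hk).trans_le (by linarith)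
  have hi₀ : i₀ ∈ near := by
    cases h : loses i₀ i₀
    · simpa [near] using (hd_wins i₀ i₀ h).trans_le (by linarith)
    · exact hd_loser_i₀ i₀ h
  have hc : 0 < c := by
    have := hd_triangle i₀ i₀ i₀
    simp only [near, Finset.mem_filter] at hi₀
    linarith
  -- `w` is far from `i₀`, so it loses to everything near `i₀`, while `i₀` loses only to those.
  have hnear_w : near ⊆ Finset.univ.filter fun k => k ≠ w ∧ loses w k = true := by
    intro k hk
    simp only [near, Finset.mem_filter, Finset.mem_univ, true_and] at hk ⊢
    refine ⟨fun hkw => ?_, ?_⟩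
    · rw [hkw, hd_comm] at hk
      linarith
    · by_contra hwk
      have := hd_wins w k (by simpa using hwk)
      linarith [hd_triangle w k i₀, hd_comm k i₀, hg k]
  have hloss_i₀ : (Finset.univ.filter fun k => k ≠ i₀ ∧ loses i₀ k = true) ⊆ near.erase i₀ :=
    fun k hk => by
      simp only [Finset.mem_filter, Finset.mem_univ, true_and] at hk
      exact Finset.mem_erase.mpr ⟨hk.1, hd_loser_i₀ k hk.2⟩
  exact (hw i₀).not_gt <| (Finset.card_lt_card <|
    Finset.ssubset_of_subset_of_ssubset hloss_i₀ (Finset.erase_ssubset hi₀)).trans_le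
    (Finset.card_le_card hnear_w)

lemma tvDist_scheffeTournament_winner_lt {ι : Type*} [Fintype ι] [DecidableEq ι]
    (P : ι → Measure Ω) [∀ i, IsProbabilityMeasure (P i)] (μ : Measure Ω)
    [IsProbabilityMeasure μ] {r t : ℝ} {i₀ : ι} (hi₀ : tvDist μ (P i₀) ≤ r)
    (s : ι → ι → ℝ) (hs : ∀ j k, |s j k - (μ (scheffeSet (P j) (P k))).toReal| < t)
    (loses : ι → ι → Bool)
    (hloses : ∀ j k, loses j k = true ↔ |s j k - (P j (scheffeSet (P j) (P k))).toReal|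
        > |s j k - (P k (scheffeSet (P j) (P k))).toReal|)
    {w : ι} (hw : ∀ j, (Finset.univ.filter fun k => k ≠ w ∧ loses w k = true).card
      ≤ (Finset.univ.filter fun k => k ≠ j ∧ loses j k = true).card) :
    tvDist (P w) (P i₀) < 8 * (t + r) :=
  tournament_winner_dist_lt (fun j k => tvDist (P j) (P k)) (fun _ _ => tvDist_comm _ _)
    (fun _ _ _ => tvDist_triangle) loses (fun k => t + tvDist μ (P k)) (by linarith)
    (fun k => by linarith [tvDist_triangle (P := μ) (Q := P i₀) (R := P k)])
    (fun j k h => tvDist_lt_of_scheffe_loser (hs j k) (by linarith [(hloses j k).mp h]))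
    (fun j k h => tvDist_lt_of_scheffe_loser (hs j k) (by
      have := (hloses j k).not.mp (by simp [h])
      linarith))
    hw

end ScheffeTournament

theorem stmt11_general {Ω Θ : Type*} [MeasurableSpace Ω]
    (Pm : Θ → Measure Ω) (hPm : ∀ θ, IsProbabilityMeasure (Pm θ))
    (n m : ℕ) (hn : 0 < n)
    (δ ε η : ℝ) (hε0 : 0 ≤ ε) (hε1 : ε < 1)
    (hη : η > 8 * (ε + δ))
    (cover : Fin m → Θ)
    (hcover : ∀ θ : Θ, ∃ j, tvDist (Pm (cover j)) (Pm θ) ≤ δ)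
    -- Scheffé sets `A_{jk} = {p_{θ_j} > p_{θ_k}}`
    (A : Fin m → Fin m → Set Ω)
    (hA : ∀ j k, A j k = {x | (Pm (cover k)).rnDeriv (Pm (cover j) + Pm (cover k)) x
                              < (Pm (cover j)).rnDeriv (Pm (cover j) + Pm (cover k)) x})
    -- pairwise Scheffé tests
    (φ : Fin m → Fin m → (Fin n → Ω) → Bool)
    (hφ : ∀ j k x, (φ j k x = true ↔
      |(∑ i, (A j k).indicator (fun _ => (1:ℝ)) (x i)) / n - ((Pm (cover j)) (A j k)).toReal|
        > |(∑ i, (A j k).indicator (fun _ => (1:ℝ)) (x i)) / n - ((Pm (cover k)) (A j k)).toReal|))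
    -- tournament winner: minimizes the number of lost pairwise competitions
    (jhat : (Fin n → Ω) → Fin m)
    (hjhat : ∀ (x : Fin n → Ω) (j : Fin m),
      (Finset.univ.filter (fun k => k ≠ jhat x ∧ φ (jhat x) k x = true)).card
        ≤ (Finset.univ.filter (fun k => k ≠ j ∧ φ j k x = true)).card)
    (θ : Θ) (Q : Measure Ω) (hQ : IsProbabilityMeasure Q) :
    ((Measure.pi (fun _ : Fin n => mix ε (Pm θ) Q))
        {x | tvDist (Pm (cover (jhat x))) (Pm θ) > η + δ}).toReal
      ≤ 4 * (m : ℝ) ^ 2 * Real.exp (-((n : ℝ) / 2) * (η / 4 - 2 * (ε + δ)) ^ 2) := by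
  obtain rfl : A = fun j k => scheffeSet (Pm (cover j)) (Pm (cover k)) := funext₂ hA
  set μ := mix ε (Pm θ) Q
  have : IsProbabilityMeasure μ := isProbabilityMeasure_mix hε0 hε1.le
  obtain ⟨i₀, hi₀⟩ := hcover θ
  have hμi₀ : tvDist μ (Pm (cover i₀)) ≤ ε + δ :=
    tvDist_triangle.trans (add_le_add (tvDist_mix_le hε0 hε1.le) (by rwa [tvDist_comm]))
  set t := η / 8 - (ε + δ) with ht_def
  have hbad : {x | tvDist (Pm (cover (jhat x))) (Pm θ) > η + δ} ⊆ {x | ∃ jk : Fin m × Fin m,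
      t ≤ |empiricalFreq x (scheffeSet (Pm (cover jk.1)) (Pm (cover jk.2)))
        - (μ (scheffeSet (Pm (cover jk.1)) (Pm (cover jk.2)))).toReal|} := by
    intro x (hx : tvDist (Pm (cover (jhat x))) (Pm θ) > η + δ)
    by_contra hgood
    simp only [Set.mem_ofPred_eq, not_exists, not_le, Prod.forall] at hgood
    have := tvDist_scheffeTournament_winner_lt (fun j => Pm (cover j)) μ hμi₀ _ hgood
      (φ · · x) (hφ · · x) (hjhat x)
    linarith [tvDist_triangle (P := Pm (cover (jhat x))) (Q := Pm (cover i₀)) (R := Pm θ)]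
  calc _ ≤ (Fintype.card (Fin m × Fin m) : ℝ) * (2 * Real.exp (-2 * n * t ^ 2)) :=
        (measureReal_mono hbad).trans <| measureReal_exists_abs_empiricalFreq_sub_ge_le
          (fun _ => measurableSet_scheffeSet) hn (by linarith)
    _ = 2 * (m : ℝ) ^ 2 * Real.exp (-((n : ℝ) / 2) * (η / 4 - 2 * (ε + δ)) ^ 2) := by
        simp only [Fintype.card_prod, Fintype.card_fin, Nat.cast_mul, ht_def]
        ring_nf
    _ ≤ 4 * (m : ℝ) ^ 2 * Real.exp (-((n : ℝ) / 2) * (η / 4 - 2 * (ε + δ)) ^ 2) := by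
        gcongr; norm_num

/-- the Scheffé tournament-winner estimator over a δ-covering set of size `m`
(the δ-covering number) satisfies, for `η > 8(ε+δ)` and any `θ ∈ Θ` and contamination `Q`,
`P( TV(P_θ̂, P_θ) > η + δ ) ≤ 4 m² exp(-(n/2)(η/4 - 2(ε+δ))²)`. -/
theorem stmt11 {Ω Θ : Type*} [MeasurableSpace Ω]
    (Pm : Θ → Measure Ω) (hPm : ∀ θ, IsProbabilityMeasure (Pm θ))
    (n m : ℕ) (hn : 0 < n) (hm : 0 < m)
    (δ ε η : ℝ) (hδ : 0 ≤ δ) (hε0 : 0 ≤ ε) (hε1 : ε < 1)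
    (hη : η > 8 * (ε + δ))
    (cover : Fin m → Θ)
    (hcover : ∀ θ : Θ, ∃ j, tvDist (Pm (cover j)) (Pm θ) ≤ δ)
    -- `m` is the δ-covering number: no smaller covering set exists
    (hmin : ∀ (m' : ℕ) (cover' : Fin m' → Θ),
      (∀ θ : Θ, ∃ j, tvDist (Pm (cover' j)) (Pm θ) ≤ δ) → m ≤ m')
    -- Scheffé sets `A_{jk} = {p_{θ_j} > p_{θ_k}}`
    (A : Fin m → Fin m → Set Ω)
    (hA : ∀ j k, A j k = {x | (Pm (cover k)).rnDeriv (Pm (cover j) + Pm (cover k)) x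
                              < (Pm (cover j)).rnDeriv (Pm (cover j) + Pm (cover k)) x})
    -- pairwise Scheffé tests
    (φ : Fin m → Fin m → (Fin n → Ω) → Bool)
    (hφ : ∀ j k x, (φ j k x = true ↔
      |(∑ i, (A j k).indicator (fun _ => (1:ℝ)) (x i)) / n - ((Pm (cover j)) (A j k)).toReal|
        > |(∑ i, (A j k).indicator (fun _ => (1:ℝ)) (x i)) / n - ((Pm (cover k)) (A j k)).toReal|))
    -- tournament winner: minimizes the number of lost pairwise competitions
    (jhat : (Fin n → Ω) → Fin m)
    (hjhat : ∀ (x : Fin n → Ω) (j : Fin m),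
      (Finset.univ.filter (fun k => k ≠ jhat x ∧ φ (jhat x) k x = true)).card
        ≤ (Finset.univ.filter (fun k => k ≠ j ∧ φ j k x = true)).card)
    (θ : Θ) (Q : Measure Ω) (hQ : IsProbabilityMeasure Q) :
    ((Measure.pi (fun _ : Fin n => mix ε (Pm θ) Q))
        {x | tvDist (Pm (cover (jhat x))) (Pm θ) > η + δ}).toReal
      ≤ 4 * (m : ℝ) ^ 2 * Real.exp (-((n : ℝ) / 2) * (η / 4 - 2 * (ε + δ)) ^ 2) :=
  stmt11_general Pm hPm n m hn δ ε η hε0 hε1 hη cover hcover A hA φ hφ jhat hjhat θ Q hQ
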